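/- For every (N, D, λ)-graph G and all sets S, T ⊆ V(G), one has |e(S, T) − D·|S|·|T|/N| ≤ λ·√(|S|·|T|·(1 − |S|/N)·(1 − |T|/N)). -/

import Mathlib

open SimpleGraph

/-- The maximum degree of `G` is at most `d`: every vertex has at most `d` neighbours. -/
def MaxDegLE {α : Type*} (G : SimpleGraph α) (d : ℕ) : Prop :=
  ∀ v, (G.neighborSet v).ncard ≤ d

/-- A closed walk `c` in `G` has a chord: an edge of `G` between two vertices of `c`
that is not an edge of `c`. -/
def HasChord {α : Type*} (G : SimpleGraph α) {u : α} (c : G.Walk u u) : Prop :=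
  ∃ x y, x ∈ c.support ∧ y ∈ c.support ∧ G.Adj x y ∧ s(x, y) ∉ c.edges

/-- A graph is chordal if every cycle of length at least 4 has a chord. -/
def IsChordal {α : Type*} (G : SimpleGraph α) : Prop :=
  ∀ (u : α) (c : G.Walk u u), c.IsCycle → 4 ≤ c.length → HasChord G c

/-- `G` has treewidth at most `w`: `G` is a subgraph of a chordal graph with no
clique on `w + 2` vertices. -/
def TreewidthLE {α : Type*} (G : SimpleGraph α) (w : ℕ) : Prop :=
  ∃ G' : SimpleGraph α, G ≤ G' ∧ IsChordal G' ∧ G'.CliqueFree (w + 2)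

/-- `G` contains a copy of `H` (a subgraph isomorphic to `H`). -/
def HasCopy {α β : Type*} (G : SimpleGraph α) (H : SimpleGraph β) : Prop :=
  ∃ f : β ↪ α, ∀ u v, H.Adj u v → G.Adj (f u) (f v)

/-- Under the edge-colouring `c` of `G`, there is a copy of `H` all of whose edges
get colour `col`. -/
def HasMonoCopy {α β : Type*} (G : SimpleGraph α) (c : Sym2 α → Bool)
    (H : SimpleGraph β) (col : Bool) : Prop :=
  ∃ f : β ↪ α, ∀ u v, H.Adj u v → G.Adj (f u) (f v) ∧ c s(f u, f v) = col

/-- `G` is Ramsey for `H`: every 2-colouring of the edges of `G` contains a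
monochromatic copy of `H`. -/
def IsRamsey {α β : Type*} (G : SimpleGraph α) (H : SimpleGraph β) : Prop :=
  ∀ c : Sym2 α → Bool, ∃ col : Bool, HasMonoCopy G c H col

/-- `G` is `d`-degenerate: every nonempty (induced) subgraph has a vertex of degree
at most `d`. -/
def Degenerate {α : Type*} (d : ℕ) (G : SimpleGraph α) : Prop :=
  ∀ s : Set α, s.Nonempty → ∃ v ∈ s, (G.neighborSet v ∩ s).ncard ≤ d

/-- The strong product `G ⊠ H`. -/
def strongProd {α β : Type*} (G : SimpleGraph α) (H : SimpleGraph β) :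
    SimpleGraph (α × β) where
  Adj a b := (a.1 = b.1 ∧ H.Adj a.2 b.2) ∨ (G.Adj a.1 b.1 ∧ a.2 = b.2) ∨
    (G.Adj a.1 b.1 ∧ H.Adj a.2 b.2)
  symm := by
    refine ⟨?_⟩
    rintro a b (⟨h1, h2⟩ | ⟨h1, h2⟩ | ⟨h1, h2⟩)
    · exact Or.inl ⟨h1.symm, h2.symm⟩
    · exact Or.inr (Or.inl ⟨h1.symm, h2.symm⟩)
    · exact Or.inr (Or.inr ⟨h1.symm, h2.symm⟩)
  loopless := by
    refine ⟨?_⟩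
    rintro a (⟨_, h⟩ | ⟨h, _⟩ | ⟨h, _⟩)
    · exact H.irrefl h
    · exact G.irrefl h
    · exact G.irrefl h

/-- The complete `d`-ary tree of height `h`: vertices are sequences over `Fin d`
of length at most `h` (the root is the empty sequence), and each vertex `l` of
length `< h` has the `d` children `a :: l`. -/
def completeAryTree (d h : ℕ) : SimpleGraph {l : List (Fin d) // l.length ≤ h} :=
  SimpleGraph.fromRel (fun v w => ∃ a : Fin d, w.val = a :: v.val)

/-- `G` is an `(N, D, λ)`-graph: a `D`-regular graph on `N` vertices all of whose
adjacency eigenvalues, except the largest one (which is `D`, on the all-ones vector),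
are at most `lam` in absolute value. This is expressed by the equivalent quadratic-form
condition on the orthogonal complement of the all-ones vector. -/
def IsNDL {α : Type*} [Fintype α] (G : SimpleGraph α) [DecidableRel G.Adj]
    (N D : ℕ) (lam : ℝ) : Prop :=
  Fintype.card α = N ∧ (∀ v, (G.neighborSet v).ncard = D) ∧
  ∀ x : α → ℝ, (∑ v, x v) = 0 →
    |∑ v : α, ∑ w : α, (if G.Adj v w then x v * x w else 0)| ≤ lam * ∑ v, x v ^ 2

/-!
Put `x = 1_S - (|S|/N)·1` and `y = 1_T - (|T|/N)·1`. Both are orthogonal to the all-ones vector,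
`‖x‖² = |S|(1 - |S|/N)`, and since `A·1 = D·1` for the adjacency matrix `A`, one gets
`⟨x, A y⟩ = e(S, T) - D|S||T|/N`. The eigenvalue hypothesis bounds the quadratic form of `A` on
`1^⊥` by `λ‖·‖²`; polarizing it gives `|⟨x, A y⟩| ≤ λ‖x‖‖y‖`.
-/

open Matrix Finset

namespace Matrix

variable {ι : Type*} [Fintype ι]

theorem IsSymm.dotProduct_mulVec_comm {R : Type*} [CommSemiring R] {A : Matrix ι ι R}
    (hA : A.IsSymm) (x y : ι → R) : y ⬝ᵥ (A *ᵥ x) = x ⬝ᵥ (A *ᵥ y) := by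
  rw [dotProduct_mulVec, ← mulVec_transpose, hA.eq, dotProduct_comm]

theorem IsSymm.abs_dotProduct_mulVec_le {A : Matrix ι ι ℝ} (hA : A.IsSymm)
    {W : Submodule ℝ (ι → ℝ)} {lam : ℝ}
    (hW : ∀ x ∈ W, |x ⬝ᵥ (A *ᵥ x)| ≤ lam * (x ⬝ᵥ x)) {x y : ι → ℝ} (hx : x ∈ W) (hy : y ∈ W) :
    |x ⬝ᵥ (A *ᵥ y)| ≤ lam * √((x ⬝ᵥ x) * (y ⬝ᵥ y)) := by
  have nonneg (z : ι → ℝ) : 0 ≤ z ⬝ᵥ z := sum_nonneg fun i _ => mul_self_nonneg (z i)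
  set a := √(y ⬝ᵥ y)
  set b := √(x ⬝ᵥ x)
  have ha : a ^ 2 = y ⬝ᵥ y := Real.sq_sqrt (nonneg y)
  have hb : b ^ 2 = x ⬝ᵥ x := Real.sq_sqrt (nonneg x)
  rw [show √((x ⬝ᵥ x) * (y ⬝ᵥ y)) = a * b by rw [Real.sqrt_mul (nonneg x), mul_comm]]
  rcases (mul_nonneg (Real.sqrt_nonneg _) (Real.sqrt_nonneg _) : 0 ≤ a * b).eq_or_lt with h0 | hpos
  · rcases mul_eq_zero.mp h0.symm with h | h
    · obtain rfl : y = 0 := dotProduct_self_eq_zero.mp (by rw [← ha, h, sq, zero_mul])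
      simp [← h0]
    · obtain rfl : x = 0 := dotProduct_self_eq_zero.mp (by rw [← hb, h, sq, zero_mul])
      simp [← h0]
  -- Polarize along `a x ± b y`, whose squared norms add up to `4 a² b²` by the parallelogram law.
  have hpolar : (a • x + b • y) ⬝ᵥ (A *ᵥ (a • x + b • y)) - (a • x - b • y) ⬝ᵥ (A *ᵥ (a • x - b • y))
      = 4 * (a * b) * (x ⬝ᵥ (A *ᵥ y)) := by
    simp only [mulVec_add, mulVec_sub, mulVec_smul, add_dotProduct, dotProduct_add, sub_dotProduct,
      dotProduct_sub, smul_dotProduct, dotProduct_smul, smul_eq_mul, hA.dotProduct_mulVec_comm x y]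
    ring
  have hparallelogram : (a • x + b • y) ⬝ᵥ (a • x + b • y) + (a • x - b • y) ⬝ᵥ (a • x - b • y)
      = 4 * (a * b) * (a * b) := by
    simp only [add_dotProduct, dotProduct_add, sub_dotProduct, dotProduct_sub, smul_dotProduct,
      dotProduct_smul, smul_eq_mul, ← ha, ← hb]
    rw [dotProduct_comm x y]
    ring
  have h4 : 4 * (a * b) * |x ⬝ᵥ (A *ᵥ y)| ≤ 4 * (a * b) * (lam * (a * b)) := by
    rw [← abs_of_pos (by positivity : 0 < 4 * (a * b)), ← abs_mul, ← hpolar,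
      abs_of_pos (by positivity : 0 < 4 * (a * b))]
    calc _ ≤ _ := abs_sub _ _
      _ ≤ lam * ((a • x + b • y) ⬝ᵥ (a • x + b • y)) +
            lam * ((a • x - b • y) ⬝ᵥ (a • x - b • y)) :=
          add_le_add (hW _ (W.add_mem (W.smul_mem a hx) (W.smul_mem b hy)))
            (hW _ (W.sub_mem (W.smul_mem a hx) (W.smul_mem b hy)))
      _ = 4 * (a * b) * (lam * (a * b)) := by rw [← mul_add, hparallelogram]; ring
  exact le_of_mul_le_mul_left h4 (by positivity)

end Matrix

namespace Finset

variable {V : Type*} [Fintype V]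

noncomputable def centeredIndicator (S : Finset V) : V → ℝ :=
  (S : Set V).indicator 1 - (#S / Fintype.card V : ℝ) • 1

theorem indicator_one_dotProduct_one (S : Finset V) :
    (S : Set V).indicator 1 ⬝ᵥ (1 : V → ℝ) = #S := by
  classical
  simp [dotProduct, Set.indicator_apply]

theorem card_univ_mul_card_div_card_univ (S : Finset V) :
    (Fintype.card V : ℝ) * (#S / Fintype.card V) = #S := by
  rcases eq_or_ne (Fintype.card V) 0 with h | h
  · have : S = ∅ := by
      rw [← card_eq_zero, ← Nat.le_zero, ← h]
      exact S.card_le_univ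
    simp [this]
  · exact mul_div_cancel₀ _ (by exact_mod_cast h)

theorem centeredIndicator_dotProduct_one (S : Finset V) : S.centeredIndicator ⬝ᵥ 1 = 0 := by
  rw [centeredIndicator, sub_dotProduct, smul_dotProduct, indicator_one_dotProduct_one,
    one_dotProduct_one, smul_eq_mul, mul_comm, card_univ_mul_card_div_card_univ, sub_self]

theorem centeredIndicator_dotProduct_self (S : Finset V) :
    S.centeredIndicator ⬝ᵥ S.centeredIndicator = #S * (1 - #S / Fintype.card V) := by
  classical
  have hind : (S : Set V).indicator 1 ⬝ᵥ (S : Set V).indicator (1 : V → ℝ) = #S := by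
    simp [dotProduct, Set.indicator_apply]
  nth_rw 2 [centeredIndicator]
  rw [dotProduct_sub, dotProduct_smul, centeredIndicator_dotProduct_one, centeredIndicator,
    sub_dotProduct, smul_dotProduct, hind, one_dotProduct, ← dotProduct_one,
    indicator_one_dotProduct_one, smul_eq_mul, smul_zero]
  ring

end Finset

namespace SimpleGraph

variable {V : Type*} [Fintype V] (G : SimpleGraph V) [DecidableRel G.Adj]

theorem isRegularOfDegree_of_ncard_neighborSet {d : ℕ} (h : ∀ v, (G.neighborSet v).ncard = d) :
    G.IsRegularOfDegree d := fun v => by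
  rw [← h v, ← card_neighborSet_eq_degree, Set.ncard_eq_toFinset_card', Set.toFinset_card]

theorem sum_sum_ite_adj_mul_eq_dotProduct_adjMatrix_mulVec {R : Type*} [NonAssocSemiring R]
    (x y : V → R) :
    ∑ v, ∑ w, (if G.Adj v w then x v * y w else 0) = x ⬝ᵥ (G.adjMatrix R *ᵥ y) := by
  simp [dotProduct, mulVec, adjMatrix_apply, mul_sum]

theorem sum_sum_ite_adj_eq_indicator_dotProduct_adjMatrix_mulVec (S T : Finset V) :
    (∑ u ∈ S, ∑ v ∈ T, if G.Adj u v then (1 : ℝ) else 0) =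
      (S : Set V).indicator 1 ⬝ᵥ (G.adjMatrix ℝ *ᵥ (T : Set V).indicator 1) := by
  classical
  rw [← sum_sum_ite_adj_mul_eq_dotProduct_adjMatrix_mulVec]
  have (u v : V) : (if G.Adj u v then (S : Set V).indicator 1 u * (T : Set V).indicator 1 v
      else (0 : ℝ)) = if u ∈ S then if v ∈ T then if G.Adj u v then 1 else 0 else 0 else 0 := by
    by_cases u ∈ S <;> by_cases v ∈ T <;> simp [*]
  simp only [this, sum_ite_mem, univ_inter, sum_ite_irrel, sum_const_zero]

variable {G}

theorem IsRegularOfDegree.adjMatrix_mulVec_one {R : Type*} [NonAssocSemiring R] {d : ℕ}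
    (hG : G.IsRegularOfDegree d) : G.adjMatrix R *ᵥ 1 = (d : R) • 1 :=
  funext fun _ => by simpa using adjMatrix_mulVec_const_apply_of_regular (a := (1 : R)) hG

theorem IsRegularOfDegree.centeredIndicator_dotProduct_adjMatrix_mulVec {d : ℕ}
    (hG : G.IsRegularOfDegree d) (S T : Finset V) :
    S.centeredIndicator ⬝ᵥ (G.adjMatrix ℝ *ᵥ T.centeredIndicator) =
      (S : Set V).indicator 1 ⬝ᵥ (G.adjMatrix ℝ *ᵥ (T : Set V).indicator 1) -
        d * #S * #T / Fintype.card V := by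
  rw [centeredIndicator.eq_1 T, mulVec_sub, mulVec_smul, hG.adjMatrix_mulVec_one,
    dotProduct_sub, dotProduct_smul, dotProduct_smul, centeredIndicator_dotProduct_one,
    centeredIndicator, sub_dotProduct, smul_dotProduct,
    (isSymm_adjMatrix G).dotProduct_mulVec_comm _ 1, hG.adjMatrix_mulVec_one, dotProduct_smul,
    indicator_one_dotProduct_one, smul_zero, smul_zero, smul_eq_mul, smul_eq_mul, sub_zero]
  ring

end SimpleGraph

section IsNDL

variable {α : Type*} [Fintype α] {G : SimpleGraph α} [DecidableRel G.Adj] {N D : ℕ} {lam : ℝ}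

theorem IsNDL.isRegularOfDegree (hG : IsNDL G N D lam) : G.IsRegularOfDegree D :=
  G.isRegularOfDegree_of_ncard_neighborSet hG.2.1

theorem IsNDL.abs_dotProduct_adjMatrix_mulVec_self_le (hG : IsNDL G N D lam) :
    ∀ x ∈ LinearMap.ker (dotProductBilin ℝ ℝ (1 : α → ℝ)),
      |x ⬝ᵥ (G.adjMatrix ℝ *ᵥ x)| ≤ lam * (x ⬝ᵥ x) := fun x hx => by
  rw [LinearMap.mem_ker, dotProductBilin_apply_apply, one_dotProduct] at hx
  have h := hG.2.2 x hx
  rw [G.sum_sum_ite_adj_mul_eq_dotProduct_adjMatrix_mulVec] at h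
  simpa only [dotProduct, sq] using h

end IsNDL

/-- For every `(N, D, λ)`-graph `G` and all vertex sets `S, T`,
`|e(S,T) - D|S||T|/N| ≤ λ √(|S||T|(1 - |S|/N)(1 - |T|/N))`, where `e(S, T)` counts
the edges with one endpoint in `S` and the other in `T`, edges with both endpoints
in `S ∩ T` being counted twice. -/
theorem statement12 {α : Type} [Fintype α] (G : SimpleGraph α) [DecidableRel G.Adj]
    (N D : ℕ) (lam : ℝ) (hG : IsNDL G N D lam) (S T : Finset α) :
    |(∑ u ∈ S, ∑ v ∈ T, if G.Adj u v then (1 : ℝ) else 0) -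
        (D : ℝ) * S.card * T.card / N| ≤
      lam * Real.sqrt ((S.card : ℝ) * T.card *
        (1 - (S.card : ℝ) / N) * (1 - (T.card : ℝ) / N)) := by
  have hmem (S : Finset α) :
      S.centeredIndicator ∈ LinearMap.ker (dotProductBilin ℝ ℝ (1 : α → ℝ)) := by
    rw [LinearMap.mem_ker, dotProductBilin_apply_apply, dotProduct_comm,
      S.centeredIndicator_dotProduct_one]
  have key := G.isSymm_adjMatrix.abs_dotProduct_mulVec_le
    hG.abs_dotProduct_adjMatrix_mulVec_self_le (hmem S) (hmem T)
  rw [hG.isRegularOfDegree.centeredIndicator_dotProduct_adjMatrix_mulVec,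
    S.centeredIndicator_dotProduct_self, T.centeredIndicator_dotProduct_self,
    ← G.sum_sum_ite_adj_eq_indicator_dotProduct_adjMatrix_mulVec, hG.1] at key
  convert key using 3
  ring
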